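/- The convergent of the continued fraction expansion of C₁₀ truncated immediately before coefficient number 18 (the high water mark of HWM number 5) has numerator 60499999499 and denominator 490050000000 = 4.9005·10^11: the 17th convergent numerator of GenContFract.of C₁₀ is 60499999499 and the 17th convergent denominator is 490050000000. -/

import Mathlib

/-- `pos n` is the position in the decimal expansion of Champernowne's constant
of the last digit of the integer `n`. -/
def pos (n : ℕ) : ℕ := ∑ k ∈ Finset.Icc 1 n, (Nat.digits 10 k).length

/-- Champernowne's constant in base ten. -/
noncomputable def C₁₀ : ℝ := ∑' n : ℕ, ((n + 1 : ℕ) : ℝ) / 10 ^ pos (n + 1)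

/-!
Enclose `C₁₀` between rationals by truncating the series after the digits of `100` and bounding
the tail geometrically; then run the continued fraction algorithm on both endpoints at once. As
long as the endpoints have the same integer part at every step, every number in between (`C₁₀`
among them) has the same partial quotients, and the convergent is computed from them.
-/

@[simp] theorem pos_zero : pos 0 = 0 := rfl

theorem pos_succ (n : ℕ) : pos (n + 1) = pos n + (Nat.digits 10 (n + 1)).length :=
  Finset.sum_Icc_succ_top (by omega) _

theorem pos_add_le_pos_add (n k : ℕ) : pos n + k ≤ pos (n + k) := by
  induction k with
  | zero => rfl
  | succ k ih =>
    have : 0 < (Nat.digits 10 (n + k + 1)).length :=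
      List.length_pos_iff.mpr (Nat.digits_ne_nil_iff_ne_zero.mpr (Nat.succ_ne_zero _))
    rw [← add_assoc n k 1, pos_succ]
    omega

theorem champernowne_term_le (n : ℕ) :
    ((n + 1 : ℕ) : ℝ) / 10 ^ pos (n + 1) ≤ (1 / 10) ^ pos n := by
  have hlt : ((n + 1 : ℕ) : ℝ) < 10 ^ (Nat.digits 10 (n + 1)).length := by
    exact_mod_cast Nat.lt_base_pow_length_digits (by norm_num)
  rw [pos_succ, pow_add, one_div_pow, div_le_div_iff₀ (by positivity) (by positivity)]
  nlinarith [pow_pos (by norm_num : (0 : ℝ) < 10) (pos n)]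

theorem champernowne_tail_term_le (N i : ℕ) :
    ((i + N + 1 : ℕ) : ℝ) / 10 ^ pos (i + N + 1) ≤ (1 / 10) ^ pos N * (1 / 10) ^ i := by
  rw [← pow_add]
  exact (champernowne_term_le (i + N)).trans
    (pow_le_pow_of_le_one (by norm_num) (by norm_num)
      (by simpa [add_comm i] using pos_add_le_pos_add N i))

theorem summable_champernowne : Summable fun n : ℕ ↦ ((n + 1 : ℕ) : ℝ) / 10 ^ pos (n + 1) := by
  refine Summable.of_nonneg_of_le (fun n ↦ by positivity) (fun n ↦ ?_)
    (summable_geometric_of_lt_one (r := 1 / 10) (by norm_num) (by norm_num))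
  simpa using champernowne_tail_term_le 0 n

def champernowneTrunc (N : ℕ) : ℚ := ∑ n ∈ Finset.range N, ((n + 1 : ℕ) : ℚ) / 10 ^ pos (n + 1)

theorem C₁₀_mem_Icc (N : ℕ) :
    C₁₀ ∈ Set.Icc (champernowneTrunc N : ℝ)
      ((champernowneTrunc N + 10 / 9 / 10 ^ pos N : ℚ) : ℝ) := by
  have hsplit := summable_champernowne.sum_add_tsum_nat_add N
  have htail_nonneg : 0 ≤ ∑' i : ℕ, ((i + N + 1 : ℕ) : ℝ) / 10 ^ pos (i + N + 1) :=
    tsum_nonneg fun i ↦ by positivity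
  have htail_le : ∑' i : ℕ, ((i + N + 1 : ℕ) : ℝ) / 10 ^ pos (i + N + 1) ≤ 10 / 9 / 10 ^ pos N := by
    calc _ ≤ ∑' i : ℕ, (1 / 10 : ℝ) ^ pos N * (1 / 10) ^ i :=
          Summable.tsum_le_tsum (champernowne_tail_term_le N)
            ((summable_nat_add_iff (f := fun n : ℕ ↦ ((n + 1 : ℕ) : ℝ) / 10 ^ pos (n + 1)) N).mpr
              summable_champernowne)
            ((summable_geometric_of_lt_one (by norm_num) (by norm_num)).mul_left _)
      _ = 10 / 9 / 10 ^ pos N := by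
          rw [tsum_mul_left, tsum_geometric_of_lt_one (by norm_num) (by norm_num), one_div_pow]
          ring
  simp only [champernowneTrunc, C₁₀, Set.mem_Icc, Rat.cast_add, Rat.cast_sum, Rat.cast_div,
    Rat.cast_natCast, Rat.cast_pow, Rat.cast_ofNat]
  constructor <;> linarith

theorem Int.floor_eq_of_mem_Icc {K : Type*} [Ring K] [LinearOrder K] [FloorRing K] {a b v : K}
    (hv : v ∈ Set.Icc a b) (hab : ⌊a⌋ = ⌊b⌋) : ⌊v⌋ = ⌊a⌋ :=
  le_antisymm (hab ▸ Int.floor_mono hv.2) (Int.floor_mono hv.1)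

theorem Int.fract_mem_Icc_of_floor_eq {K : Type*} [Ring K] [LinearOrder K] [IsOrderedRing K]
    [FloorRing K] {a b v : K} (hv : v ∈ Set.Icc a b) (hab : ⌊a⌋ = ⌊b⌋) :
    Int.fract v ∈ Set.Icc (Int.fract a) (Int.fract b) := by
  simp only [Int.fract, Int.floor_eq_of_mem_Icc hv hab, hab]
  exact ⟨sub_le_sub_right hv.1 _, sub_le_sub_right hv.2 _⟩

namespace GenContFract

/-- The first `n` integer parts `⌊v₀⌋, ⌊v₁⌋, …` (with `vᵢ₊₁ = (Int.fract vᵢ)⁻¹`) common to all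
numbers of `[a, b]`, or `none` if the interval is too wide to determine them. -/
def cfPrefixOfIcc : ℕ → ℚ → ℚ → Option (List ℤ)
  | 0, _, _ => some []
  | n + 1, a, b =>
    if ⌊a⌋ = ⌊b⌋ ∧ 0 < Int.fract a then
      (cfPrefixOfIcc n (Int.fract b)⁻¹ (Int.fract a)⁻¹).map (⌊a⌋ :: ·)
    else none

def ofIntList : List ℤ → GenContFract ℚ
  | [] => ⟨0, .nil⟩
  | z :: zs => ⟨z, .ofList (zs.map fun a : ℤ ↦ ⟨1, (a : ℚ)⟩)⟩

theorem of_s_get?_eq_map_stream {K : Type*} [DivisionRing K] [LinearOrder K] [FloorRing K]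
    (v : K) (n : ℕ) :
    (GenContFract.of v).s.get? n = (IntFractPair.stream v (n + 1)).map fun p ↦ ⟨1, (p.b : K)⟩ := by
  rcases h : IntFractPair.stream v (n + 1) with _ | p
  · exact of_terminatedAt_n_iff_succ_nth_intFractPair_stream_eq_none.mpr h
  · exact get?_of_eq_some_of_succ_get?_intFractPair_stream h

section Map

variable {K L : Type*} [DivisionRing K] [DivisionRing L]

theorem contsAux_eq_map (f : K →+* L) {g : GenContFract K} {g' : GenContFract L} {n : ℕ}
    (hh : g'.h = f g.h) (hs : ∀ i < n, g'.s.get? i = (g.s.get? i).map (Pair.map f)) :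
    g'.contsAux (n + 1) = (g.contsAux (n + 1)).map f := by
  suffices ∀ m ≤ n, g'.contsAux m = (g.contsAux m).map f ∧
      g'.contsAux (m + 1) = (g.contsAux (m + 1)).map f from (this n le_rfl).2
  intro m hm
  induction m with
  | zero => simp [contsAux, hh, Pair.map]
  | succ m ih =>
    obtain ⟨ih₀, ih₁⟩ := ih (by omega)
    refine ⟨ih₁, ?_⟩
    have hsm := hs m (by omega)
    rcases hgm : g.s.get? m with _ | ⟨a, b⟩
    · rw [hgm] at hsm
      simp [contsAux, hgm, hsm, ih₁]
    · rw [hgm] at hsm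
      simp [contsAux, hgm, hsm, ih₀, ih₁, nextConts, nextNum, nextDen, Pair.map]

theorem conts_eq_map (f : K →+* L) {g : GenContFract K} {g' : GenContFract L} {n : ℕ}
    (hh : g'.h = f g.h) (hs : ∀ i < n, g'.s.get? i = (g.s.get? i).map (Pair.map f)) :
    g'.conts n = (g.conts n).map f :=
  contsAux_eq_map f hh hs

end Map

variable {K : Type*} [Field K] [LinearOrder K] [IsStrictOrderedRing K] [FloorRing K]

theorem stream_map_b_eq_of_cfPrefixOfIcc_eq_some {n : ℕ} {a b : ℚ} {l : List ℤ}
    (hl : cfPrefixOfIcc n a b = some l) {v : K} (hv : v ∈ Set.Icc (a : K) b) :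
    ∀ i < n, (IntFractPair.stream v i).map IntFractPair.b = l[i]? := by
  induction n generalizing a b l v with
  | zero => simp
  | succ n ih =>
    rw [cfPrefixOfIcc] at hl
    split_ifs at hl with hab
    obtain ⟨l', hl', rfl⟩ := Option.map_eq_some_iff.mp hl
    have hab' : ⌊(a : K)⌋ = ⌊(b : K)⌋ := by simpa using hab.1
    have ha : 0 < Int.fract (a : K) := by rw [← Rat.cast_fract]; exact_mod_cast hab.2
    rintro (_ | i) hi
    · simp [IntFractPair.stream_zero, IntFractPair.of, Int.floor_eq_of_mem_Icc hv hab']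
    · have hfv := Int.fract_mem_Icc_of_floor_eq hv hab'
      have hfv_pos := ha.trans_le hfv.1
      rw [IntFractPair.stream_succ hfv_pos.ne']
      refine ih hl' ?_ i (by omega)
      push_cast [Rat.cast_fract]
      exact ⟨inv_anti₀ hfv_pos hfv.2, inv_anti₀ ha hfv.1⟩

theorem of_conts_eq_map_of_cfPrefixOfIcc_eq_some {n : ℕ} {a b : ℚ} {l : List ℤ}
    (hl : cfPrefixOfIcc (n + 1) a b = some l) {v : K} (hv : v ∈ Set.Icc (a : K) b) :
    (GenContFract.of v).conts n = ((ofIntList l).conts n).map (Rat.castHom K) := by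
  have hstream := stream_map_b_eq_of_cfPrefixOfIcc_eq_some hl hv
  obtain _ | ⟨z, zs⟩ := l
  · simpa [IntFractPair.stream_zero] using hstream 0 (by omega)
  refine conts_eq_map _ ?_ fun i hi ↦ ?_
  · simpa [ofIntList, of_h_eq_floor, IntFractPair.stream_zero, IntFractPair.of] using
      hstream 0 (by omega)
  · have hi := hstream (i + 1) (by omega)
    rw [of_s_get?_eq_map_stream,
      show (fun p : IntFractPair K ↦ (⟨1, (p.b : K)⟩ : Pair K)) = (fun z : ℤ ↦ ⟨1, z⟩) ∘ (·.b)
        from rfl,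
      ← Option.map_map, hi]
    simp [ofIntList, Stream'.Seq.ofList_get?, Option.map_map, Function.comp_def, Pair.map]

end GenContFract

theorem convergent_before_hwm5 :
    (GenContFract.of C₁₀).nums 17 = 60499999499 ∧
    (GenContFract.of C₁₀).dens 17 = 490050000000 := by
  -- `C₁₀` is within `10⁻¹⁸⁹` of this convergent, which is why the digits of `1, …, 100` are needed.
  obtain ⟨l, hl, hnum, hden⟩ : ∃ l, GenContFract.cfPrefixOfIcc 18 (champernowneTrunc 100)
      (champernowneTrunc 100 + 10 / 9 / 10 ^ pos 100) = some l ∧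
      (GenContFract.ofIntList l).nums 17 = 60499999499 ∧
      (GenContFract.ofIntList l).dens 17 = 490050000000 :=
    ⟨[0, 8, 9, 1, 149083, 1, 1, 1, 4, 1, 1, 1, 3, 4, 1, 1, 1, 15],
      by decide +kernel, by decide +kernel, by decide +kernel⟩
  have hconts := GenContFract.of_conts_eq_map_of_cfPrefixOfIcc_eq_some hl (C₁₀_mem_Icc 100)
  simp only [GenContFract.num_eq_conts_a, GenContFract.den_eq_conts_b, hconts] at hnum hden ⊢
  simp [GenContFract.Pair.map, hnum, hden]
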